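/- (Proposition 1.3, joint convexity) Fix m > 0 and γ̇ > 0, and let 0 < qa ≤ qb satisfy qa² ≥ g3(γ̇) and qb·√(γ̇²+2γ̇) ≤ √m·(1+γ̇)·ln(1+γ̇). Let N₁, N₂ ≥ 0, let q₁, q₂ ∈ [qa, qb], let λ ∈ [0,1], and let q ∈ [qa, qb] satisfy Q(q) = λ·Q(q₁) + (1−λ)·Q(q₂). Then Φ(λ·N₁ + (1−λ)·N₂, q) ≤ λ·Φ(N₁, q₁) + (1−λ)·Φ(N₂, q₂), where Φ(N, q) = exp((N·ln2/m + μ(γ̇)·q/√m)/(1 − ρ(γ̇)·q/√m)) − 1; that is, the EAR function is jointly convex with respect to the packet size N and the block error rate ε. -/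

import Mathlib

open MeasureTheory

/-- The Gaussian Q-function Q(x) = (1/√(2π))·∫ₓ^∞ exp(−t²/2) dt. -/
noncomputable def Qfun (x : ℝ) : ℝ :=
  (Real.sqrt (2 * Real.pi))⁻¹ * ∫ t in Set.Ioi x, Real.exp (-t ^ 2 / 2)

/-- ρ(γ) = 1/((1+γ)·√(γ²+2γ)) -/
noncomputable def rho (γ : ℝ) : ℝ := 1 / ((1 + γ) * Real.sqrt (γ ^ 2 + 2 * γ))

/-- μ(γ) = √(γ²+2γ)/(1+γ) − ln(1+γ)/((1+γ)·√(γ²+2γ)) -/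
noncomputable def mu (γ : ℝ) : ℝ :=
  Real.sqrt (γ ^ 2 + 2 * γ) / (1 + γ) -
    Real.log (1 + γ) / ((1 + γ) * Real.sqrt (γ ^ 2 + 2 * γ))

/-- g₃(γ) = ln(1+γ)/((γ²+2γ)·((γ²+2γ) − ln(1+γ))). -/
noncomputable def g3 (γ : ℝ) : ℝ :=
  Real.log (1 + γ) / ((γ ^ 2 + 2 * γ) * ((γ ^ 2 + 2 * γ) - Real.log (1 + γ)))

/-- The EAR function Φ(N,q) with parameters m and recursion point γ̇. -/
noncomputable def Phi (m γ' N q : ℝ) : ℝ :=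
  Real.exp ((N * Real.log 2 / m + mu γ' * q / Real.sqrt m) /
    (1 - rho γ' * q / Real.sqrt m)) - 1

/-!
Write `V` for the inverse of `Q`, so that `Φ(N, Q x) + 1 = exp g` with
`g = (A N + B V) / (1 - C V)`, `A = ln 2 / m`, `B = μ/√m`, `C = ρ/√m`. On a segment in the
`(N, ε)`-plane, `N` is affine and `v = V ∘ ε` satisfies `v'' = v v'²`, because the Gaussian
density satisfies `φ' = -x φ`. With `D = 1 - C v`, `P = B + A C N` and `X = A N' D + v' P` one
gets `g' = X / D²` and `g'' + g'² = ((X + C v' D)² + (v' D)² (v P - C²)) / D⁴`, so `exp g` is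
convex along the segment as soon as `D > 0` and `C² ≤ v B`. The bounds on `qa` and `qb` give
exactly this on `[qa, qb]`, using `μ = ρ (γ² + 2γ - ln(1+γ))`.
-/

open Real Set Filter ProbabilityTheory

lemma gaussianPDFReal_zero_one (x : ℝ) :
    gaussianPDFReal 0 1 x = (√(2 * π))⁻¹ * exp (-x ^ 2 / 2) := by
  simp [gaussianPDFReal]

lemma hasDerivAt_gaussianPDFReal_zero_one (x : ℝ) :
    HasDerivAt (gaussianPDFReal 0 1) (-x * gaussianPDFReal 0 1 x) x := by
  have hexp : HasDerivAt (fun y : ℝ ↦ -y ^ 2 / 2) (-x) x :=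
    ((hasDerivAt_pow 2 x).fun_neg.div_const 2).congr_deriv (by ring)
  rw [funext gaussianPDFReal_zero_one]
  exact (hexp.exp.const_mul _).congr_deriv (by ring)

lemma continuous_gaussianPDFReal_zero_one : Continuous (gaussianPDFReal 0 1) :=
  continuous_iff_continuousAt.2 fun x ↦ (hasDerivAt_gaussianPDFReal_zero_one x).continuousAt

lemma Qfun_eq_integral_gaussianPDFReal (x : ℝ) :
    Qfun x = ∫ t in Ioi x, gaussianPDFReal 0 1 t := by
  simp only [Qfun, gaussianPDFReal_zero_one, integral_const_mul]

lemma hasStrictDerivAt_Qfun (x : ℝ) : HasStrictDerivAt Qfun (-gaussianPDFReal 0 1 x) x := by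
  have hint : Integrable (gaussianPDFReal 0 1) := integrable_gaussianPDFReal 0 1
  have hQ : Qfun = fun y ↦
      (∫ t in Ioi 0, gaussianPDFReal 0 1 t) - ∫ t in 0..y, gaussianPDFReal 0 1 t := by
    ext y
    rw [Qfun_eq_integral_gaussianPDFReal, ← intervalIntegral.integral_Ioi_sub_Ioi' hint.integrableOn
      hint.integrableOn, sub_sub_cancel]
  rw [hQ]
  exact (intervalIntegral.integral_hasStrictDerivAt_right hint.intervalIntegrable
    (continuous_gaussianPDFReal_zero_one.stronglyMeasurableAtFilter _ _)
    continuous_gaussianPDFReal_zero_one.continuousAt).const_sub _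

lemma Qfun_strictAnti : StrictAnti Qfun :=
  strictAnti_of_hasDerivAt_neg (fun x ↦ (hasStrictDerivAt_Qfun x).hasDerivAt)
    fun x ↦ neg_neg_of_pos (gaussianPDFReal_pos 0 1 x one_ne_zero)

lemma continuous_Qfun : Continuous Qfun :=
  continuous_iff_continuousAt.2 fun x ↦ (hasStrictDerivAt_Qfun x).hasDerivAt.continuousAt

noncomputable def Qinv : ℝ → ℝ := Function.invFun Qfun

lemma Qinv_Qfun (x : ℝ) : Qinv (Qfun x) = x :=
  Function.leftInverse_invFun Qfun_strictAnti.injective x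

lemma hasDerivAt_Qinv {y : ℝ} (hy : y ∈ range Qfun) :
    HasDerivAt Qinv (-gaussianPDFReal 0 1 (Qinv y))⁻¹ y := by
  obtain ⟨x, rfl⟩ := hy
  rw [Qinv_Qfun]
  exact ((hasStrictDerivAt_Qfun x).to_local_left_inverse
    (neg_ne_zero.2 (gaussianPDFReal_pos 0 1 x one_ne_zero).ne')
    (Eventually.of_forall Qinv_Qfun)).hasDerivAt

/-- `(-φ (V y))⁻¹` is `V'(y)` for `V = Qinv`, so this is the ODE `V'' = V V'²`. -/
lemma hasDerivAt_deriv_Qinv {y : ℝ} (hy : y ∈ range Qfun) :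
    HasDerivAt (fun y ↦ (-gaussianPDFReal 0 1 (Qinv y))⁻¹)
      (Qinv y * ((-gaussianPDFReal 0 1 (Qinv y))⁻¹) ^ 2) y := by
  have hφ := gaussianPDFReal_pos 0 1 (Qinv y) one_ne_zero
  exact ((((hasDerivAt_gaussianPDFReal_zero_one (Qinv y)).comp y
    (hasDerivAt_Qinv hy)).neg).inv (neg_ne_zero.2 hφ.ne')).congr_deriv
      (by simp only [Pi.neg_apply, Function.comp_apply]; field_simp)

theorem convexOn_of_forall_segment {E : Type*} [AddCommGroup E] [Module ℝ E] {s : Set E}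
    {f : E → ℝ} (hs : Convex ℝ s)
    (h : ∀ x ∈ s, ∀ y ∈ s, ConvexOn ℝ (Icc 0 1) fun t : ℝ ↦ f (t • x + (1 - t) • y)) :
    ConvexOn ℝ s f := by
  refine ⟨hs, fun x hx y hy a b ha hb hab ↦ ?_⟩
  obtain rfl : b = 1 - a := by linarith
  simpa using (h x hx y hy).2 (x := 1) (y := 0) ⟨zero_le_one, le_rfl⟩ ⟨le_rfl, zero_le_one⟩
    ha hb hab

theorem convexOn_exp_div_of_hasDerivAt {s : Set ℝ} (hs : Convex ℝ s) {A B C n : ℝ}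
    {N v w : ℝ → ℝ} (hA : 0 ≤ A) (hC : 0 ≤ C)
    (hN : ∀ t ∈ s, HasDerivAt N n t) (hv : ∀ t ∈ s, HasDerivAt v (w t) t)
    (hw : ∀ t ∈ s, HasDerivAt w (v t * w t ^ 2) t)
    (hN₀ : ∀ t ∈ s, 0 ≤ N t) (hv₀ : ∀ t ∈ s, 0 ≤ v t)
    (hCv : ∀ t ∈ s, C * v t < 1) (hCB : ∀ t ∈ s, C ^ 2 ≤ v t * B) :
    ConvexOn ℝ s fun t ↦ exp ((A * N t + B * v t) / (1 - C * v t)) := by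
  set D : ℝ → ℝ := fun t ↦ 1 - C * v t
  set P : ℝ → ℝ := fun t ↦ B + A * C * N t
  set X : ℝ → ℝ := fun t ↦ A * n * D t + w t * P t
  have hD₀ : ∀ t ∈ s, D t ≠ 0 := fun t ht ↦ (sub_pos.2 (hCv t ht)).ne'
  have hD : ∀ t ∈ s, HasDerivAt D (-(C * w t)) t := fun t ht ↦
    ((hv t ht).const_mul C).const_sub 1
  have hg : ∀ t ∈ s, HasDerivAt (fun t ↦ (A * N t + B * v t) / D t) (X t / D t ^ 2) t :=
    fun t ht ↦ ((((hN t ht).const_mul A).add ((hv t ht).const_mul B)).div (hD t ht)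
      (hD₀ t ht)).congr_deriv (by
        have := hD₀ t ht; simp only [X, P, D, Pi.add_apply] at this ⊢; field_simp; ring)
  have hX : ∀ t ∈ s, HasDerivAt X (v t * w t ^ 2 * P t) t := fun t ht ↦
    ((((hD t ht).const_mul (A * n)).add ((hw t ht).mul
      (((hN t ht).const_mul (A * C)).const_add B)))).congr_deriv (by ring)
  have hg' : ∀ t ∈ s, HasDerivAt (fun t ↦ X t / D t ^ 2)
      ((v t * w t ^ 2 * P t * D t + 2 * C * w t * X t) / D t ^ 3) t := fun t ht ↦
    ((hX t ht).div ((hD t ht).pow 2) (pow_ne_zero 2 (hD₀ t ht))).congr_deriv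
      (by have := hD₀ t ht; simp only [Pi.pow_apply]; field_simp; ring)
  refine convexOn_of_hasDerivWithinAt2_nonneg hs
    (f' := fun t ↦ exp ((A * N t + B * v t) / D t) * (X t / D t ^ 2))
    (f'' := fun t ↦ exp ((A * N t + B * v t) / D t) *
      (((X t + C * w t * D t) ^ 2 + (w t * D t) ^ 2 * (v t * P t - C ^ 2)) / D t ^ 4))
    (fun t ht ↦ (hg t ht).exp.continuousAt.continuousWithinAt)
    (fun t ht ↦ (hg t (interior_subset ht)).exp.hasDerivWithinAt)
    (fun t ht ↦ (((hg t (interior_subset ht)).exp.mul (hg' t (interior_subset ht))).congr_deriv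
      (by have := hD₀ t (interior_subset ht); field_simp; ring)).hasDerivWithinAt) ?_
  intro t ht
  replace ht := interior_subset ht
  have hvP : 0 ≤ v t * P t - C ^ 2 := by
    have := mul_nonneg (mul_nonneg (hv₀ t ht) (mul_nonneg hA hC)) (hN₀ t ht)
    nlinarith [hCB t ht]
  have := hD₀ t ht
  positivity

lemma Phi_eq (m γ N q : ℝ) :
    Phi m γ N q = exp ((log 2 / m * N + mu γ / √m * q) / (1 - rho γ / √m * q)) - 1 := by
  unfold Phi; ring_nf

section

variable {m γ q : ℝ}

lemma log_one_add_lt (hγ : 0 < γ) : log (1 + γ) < γ ^ 2 + 2 * γ := by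
  have := log_lt_sub_one_of_pos (by linarith : 0 < 1 + γ) (by linarith : 1 + γ ≠ 1)
  nlinarith

lemma mu_eq_rho_mul (hγ : 0 < γ) :
    mu γ = rho γ * (γ ^ 2 + 2 * γ - log (1 + γ)) := by
  have hr : 0 < √(γ ^ 2 + 2 * γ) := sqrt_pos.2 (by positivity)
  have hr2 := sq_sqrt (by positivity : 0 ≤ γ ^ 2 + 2 * γ)
  unfold mu rho
  generalize √(γ ^ 2 + 2 * γ) = r at *
  field_simp
  linarith

lemma rho_div_mul_lt_one (hm : 0 < m) (hγ : 0 < γ)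
    (hq : q * √(γ ^ 2 + 2 * γ) ≤ √m * (1 + γ) * log (1 + γ)) : rho γ / √m * q < 1 := by
  have hr : 0 < √(γ ^ 2 + 2 * γ) := sqrt_pos.2 (by positivity)
  have hr2 := sq_sqrt (by positivity : 0 ≤ γ ^ 2 + 2 * γ)
  have hsm : 0 < √m := sqrt_pos.2 hm
  have hL := log_one_add_lt hγ
  unfold rho
  generalize √(γ ^ 2 + 2 * γ) = r at *
  rw [div_div, one_div_mul_eq_div, div_lt_one (by positivity)]
  refine lt_of_mul_lt_mul_right ?_ hr.le
  calc q * r ≤ √m * (1 + γ) * log (1 + γ) := hq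
    _ < √m * (1 + γ) * (γ ^ 2 + 2 * γ) := by gcongr
    _ = (1 + γ) * r * √m * r := by rw [← hr2]; ring

lemma rho_div_sq_le (hm : 0 < m) (hγ : 0 < γ) (hq₀ : 0 < q) (hg3 : g3 γ ≤ q ^ 2)
    (hq : q * √(γ ^ 2 + 2 * γ) ≤ √m * (1 + γ) * log (1 + γ)) :
    (rho γ / √m) ^ 2 ≤ q * (mu γ / √m) := by
  have hr : 0 < √(γ ^ 2 + 2 * γ) := sqrt_pos.2 (by positivity)
  have hr2 := sq_sqrt (by positivity : 0 ≤ γ ^ 2 + 2 * γ)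
  have hsm : 0 < √m := sqrt_pos.2 hm
  have hL : 0 < log (1 + γ) := log_pos (by linarith)
  have hLs := log_one_add_lt hγ
  rw [mu_eq_rho_mul hγ]
  unfold rho g3 at *
  rw [div_le_iff₀ (by nlinarith)] at hg3
  generalize √(γ ^ 2 + 2 * γ) = r at *
  generalize log (1 + γ) = L at *
  rw [← hr2] at hg3 hLs ⊢
  have key : 1 ≤ q * r * (√m * (1 + γ)) * (r ^ 2 - L) := by
    have : L ≤ L * (q * r * (√m * (1 + γ)) * (r ^ 2 - L)) := by
      calc L ≤ q * r * (q * r) * (r ^ 2 - L) := by nlinarith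
        _ ≤ q * r * (√m * (1 + γ) * L) * (r ^ 2 - L) := by gcongr
        _ = _ := by ring
    nlinarith
  field_simp
  nlinarith
end

theorem convexOn_exp_div_Qinv {A B C a b : ℝ} (hA : 0 ≤ A) (hC : 0 ≤ C) (ha : 0 ≤ a)
    (hab : a ≤ b) (hCx : ∀ x ∈ Icc a b, C * x < 1) (hCB : ∀ x ∈ Icc a b, C ^ 2 ≤ x * B) :
    ConvexOn ℝ (Ici 0 ×ˢ Icc (Qfun b) (Qfun a))
      fun p : ℝ × ℝ ↦ exp ((A * p.1 + B * Qinv p.2) / (1 - C * Qinv p.2)) := by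
  refine convexOn_of_forall_segment ((convex_Ici 0).prod (convex_Icc _ _)) ?_
  rintro ⟨N₁, ε₁⟩ ⟨hN₁, hε₁⟩ ⟨N₂, ε₂⟩ ⟨hN₂, hε₂⟩
  set e : ℝ → ℝ := fun t ↦ t * ε₁ + (1 - t) * ε₂
  have he : ∀ t, HasDerivAt e (ε₁ - ε₂) t := fun t ↦
    (((hasDerivAt_id t).mul_const ε₁).add
      (((hasDerivAt_id t).const_sub 1).mul_const ε₂)).congr_deriv (by ring)
  have hpre : ∀ t ∈ Icc (0 : ℝ) 1, ∃ x ∈ Icc a b, Qfun x = e t := fun t ht ↦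
    intermediate_value_Icc' hab continuous_Qfun.continuousOn
      (convex_Icc _ _ hε₁ hε₂ ht.1 (sub_nonneg.2 ht.2) (by ring))
  have hv : ∀ t ∈ Icc (0 : ℝ) 1, Qinv (e t) ∈ Icc a b := fun t ht ↦ by
    obtain ⟨x, hx, hxe⟩ := hpre t ht
    rwa [← hxe, Qinv_Qfun]
  have hrange : ∀ t ∈ Icc (0 : ℝ) 1, e t ∈ range Qfun := fun t ht ↦
    let ⟨x, _, hxe⟩ := hpre t ht; ⟨x, hxe⟩
  exact convexOn_exp_div_of_hasDerivAt (convex_Icc 0 1) hA hC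
    (N := fun t ↦ t * N₁ + (1 - t) * N₂) (v := fun t ↦ Qinv (e t))
    (w := fun t ↦ (-gaussianPDFReal 0 1 (Qinv (e t)))⁻¹ * (ε₁ - ε₂)) (n := N₁ - N₂)
    (fun t _ ↦ (((hasDerivAt_id t).mul_const N₁).add
      (((hasDerivAt_id t).const_sub 1).mul_const N₂)).congr_deriv (by ring))
    (fun t ht ↦ ((hasDerivAt_Qinv (hrange t ht)).comp t (he t)))
    (fun t ht ↦ (((hasDerivAt_deriv_Qinv (hrange t ht)).comp t (he t)).mul_const _).congr_deriv
      (by ring))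
    (fun t ht ↦ add_nonneg (mul_nonneg ht.1 hN₁) (mul_nonneg (sub_nonneg.2 ht.2) hN₂))
    (fun t ht ↦ ha.trans (hv t ht).1) (fun t ht ↦ hCx _ (hv t ht)) (fun t ht ↦ hCB _ (hv t ht))

theorem stmt_14_general (m γ' qa qb N₁ N₂ q₁ q₂ q lam : ℝ)
    (hm : 0 < m) (hγ' : 0 < γ')
    (hqa : 0 < qa) (hqab : qa ≤ qb)
    (hqa2 : g3 γ' ≤ qa ^ 2)
    (hqb : qb * Real.sqrt (γ' ^ 2 + 2 * γ') ≤ Real.sqrt m * (1 + γ') * Real.log (1 + γ'))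
    (hN₁ : 0 ≤ N₁) (hN₂ : 0 ≤ N₂)
    (hq₁ : q₁ ∈ Set.Icc qa qb) (hq₂ : q₂ ∈ Set.Icc qa qb)
    (hlam₀ : 0 ≤ lam) (hlam₁ : lam ≤ 1)
    (hQ : Qfun q = lam * Qfun q₁ + (1 - lam) * Qfun q₂) :
    Phi m γ' (lam * N₁ + (1 - lam) * N₂) q ≤
      lam * Phi m γ' N₁ q₁ + (1 - lam) * Phi m γ' N₂ q₂ := by
  have hρ : 0 < rho γ' := by unfold rho; positivity
  have hqx : ∀ x ∈ Icc qa qb, x * √(γ' ^ 2 + 2 * γ') ≤ √m * (1 + γ') * log (1 + γ') :=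
    fun x hx ↦ le_trans (by gcongr; exact hx.2) hqb
  have hconv := convexOn_exp_div_Qinv (A := log 2 / m) (by positivity) (by positivity) hqa.le
    hqab (fun x hx ↦ rho_div_mul_lt_one hm hγ' (hqx x hx))
    (fun x hx ↦ rho_div_sq_le hm hγ' (hqa.trans_le hx.1)
      (hqa2.trans (pow_le_pow_left₀ hqa.le hx.1 2)) (hqx x hx))
  have hmem : ∀ N x : ℝ, 0 ≤ N → x ∈ Icc qa qb →
      (N, Qfun x) ∈ Ici 0 ×ˢ Icc (Qfun qb) (Qfun qa) :=
    fun N x hN hx ↦ ⟨hN, Qfun_strictAnti.antitone hx.2, Qfun_strictAnti.antitone hx.1⟩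
  have h := hconv.2 (hmem N₁ q₁ hN₁ hq₁) (hmem N₂ q₂ hN₂ hq₂) hlam₀ (sub_nonneg.2 hlam₁)
    (add_sub_cancel _ _)
  simp only [Prod.smul_mk, Prod.mk_add_mk, smul_eq_mul, ← hQ, Qinv_Qfun] at h
  simp only [Phi_eq]
  linarith

/-- The EAR function is jointly convex w.r.t. the packet size N and the BLER ε. -/
theorem stmt_14 (m γ' qa qb N₁ N₂ q₁ q₂ q lam : ℝ)
    (hm : 0 < m) (hγ' : 0 < γ')
    (hqa : 0 < qa) (hqab : qa ≤ qb)
    (hqa2 : g3 γ' ≤ qa ^ 2)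
    (hqb : qb * Real.sqrt (γ' ^ 2 + 2 * γ') ≤ Real.sqrt m * (1 + γ') * Real.log (1 + γ'))
    (hN₁ : 0 ≤ N₁) (hN₂ : 0 ≤ N₂)
    (hq₁ : q₁ ∈ Set.Icc qa qb) (hq₂ : q₂ ∈ Set.Icc qa qb)
    (hlam₀ : 0 ≤ lam) (hlam₁ : lam ≤ 1)
    (hq : q ∈ Set.Icc qa qb)
    (hQ : Qfun q = lam * Qfun q₁ + (1 - lam) * Qfun q₂) :
    Phi m γ' (lam * N₁ + (1 - lam) * N₂) q ≤
      lam * Phi m γ' N₁ q₁ + (1 - lam) * Phi m γ' N₂ q₂ :=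
  stmt_14_general m γ' qa qb N₁ N₂ q₁ q₂ q lam hm hγ' hqa hqab hqa2 hqb hN₁ hN₂ hq₁ hq₂ hlam₀ hlam₁
    hQ
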